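/- arXiv:2007.11187 — 8 statements merged into one kernel-verified Lean document; each statement's English description precedes it below -/
import Mathlib

section
/- Let n ≥ 1 and let (t_j)_{j≥-n} be nonnegative reals with t_{-n} > 0. Suppose (x_k)_{k≥0} satisfies x_k = Σ_{j=-n}^{k} t_j x_{k-j} for all k ≥ 0. Then for |z| < 1 where all series converge absolutely and τ(z) ≠ z^n, the generating function χ(z) = Σ_{k≥0} x_k z^k satisfies χ(z) = (Σ_{k=0}^{n-1} x_k Σ_{j=k+1}^{n} t_{-j} z^{n-j+k}) / (τ(z) − z^n), where τ(z) = Σ_{k≥0} t_{k-n} z^k. -/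
open Filter

/-- Generating function of a solution of the banded Toeplitz fixed-point equation
`x_k = ∑_{j=-n}^k t_j x_{k-j}` (formula \eqref{18} of the paper). -/
theorem stmt1 (n : ℕ) (hn : 1 ≤ n) (t : ℤ → ℝ) (x : ℕ → ℝ)
    (ht : ∀ j : ℤ, -(n : ℤ) ≤ j → 0 ≤ t j) (htn : 0 < t (-(n : ℤ)))
    (hrec : ∀ k : ℕ, x k = ∑ j ∈ Finset.range (k + n + 1), t ((j : ℤ) - n) * x (k + n - j))
    (z : ℝ) (hz : |z| < 1)
    (hx : Summable fun k : ℕ => |x k * z ^ k|)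
    (hts : Summable fun k : ℕ => |t ((k : ℤ) - n) * z ^ k|)
    (hden : (∑' k : ℕ, t ((k : ℤ) - n) * z ^ k) ≠ z ^ n) :
    (∑' k : ℕ, x k * z ^ k) =
      (∑ k ∈ Finset.range n, x k * ∑ j ∈ Finset.Icc (k + 1) n, t (-(j : ℤ)) * z ^ (n - j + k)) /
        ((∑' k : ℕ, t ((k : ℤ) - n) * z ^ k) - z ^ n) := by
  have hts' : Summable fun k : ℕ => ‖t ((k : ℤ) - n) * z ^ k‖ := by
    simpa only [Real.norm_eq_abs] using hts
  have hx' : Summable fun k : ℕ => ‖x k * z ^ k‖ := by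
    simpa only [Real.norm_eq_abs] using hx
  set f : ℕ → ℝ := fun k => t ((k : ℤ) - n) * z ^ k with hf
  set g : ℕ → ℝ := fun k => x k * z ^ k with hg
  set S : ℕ → ℝ := fun m => ∑ j ∈ Finset.range (m + 1), f j * g (m - j) with hSdef
  have hScauchy : (∑' k, f k) * (∑' k, g k) = ∑' m, S m :=
    tsum_mul_tsum_eq_tsum_sum_range_of_summable_norm hts' hx'
  have hSsum : Summable S :=
    (summable_norm_sum_mul_range_of_summable_norm hts' hx').of_norm
  -- S m equals (∑ j t(j-n) x(m-j)) * z^m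
  have hSeq : ∀ m : ℕ, S m = (∑ j ∈ Finset.range (m + 1), t ((j : ℤ) - n) * x (m - j)) * z ^ m := by
    intro m
    rw [hSdef, Finset.sum_mul]
    apply Finset.sum_congr rfl
    intro j hj
    have hjm : j ≤ m := Nat.lt_succ_iff.mp (Finset.mem_range.mp hj)
    simp only [hf, hg]
    rw [mul_assoc, mul_comm (z ^ j), mul_assoc, ← pow_add, Nat.sub_add_cancel hjm]
    ring
  -- shifted values give x k * z^(k+n)
  have hshift : ∀ k : ℕ, S (k + n) = x k * z ^ (k + n) := by
    intro k
    rw [hSeq (k + n), ← hrec k]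
  -- Split off first n terms
  have hsplit : (∑ i ∈ Finset.range n, S i) + ∑' i, S (i + n) = ∑' m, S m :=
    Summable.sum_add_tsum_nat_add n hSsum
  have htail : (∑' i, S (i + n)) = (∑' k, g k) * z ^ n := by
    rw [← tsum_mul_right]
    apply tsum_congr
    intro k
    rw [hshift k, hg]
    rw [pow_add]
    ring
  -- main algebraic identity
  have hmain : (∑' k, g k) * ((∑' k, f k) - z ^ n) = ∑ i ∈ Finset.range n, S i := by
    have := hsplit
    rw [htail] at this
    rw [mul_sub, mul_comm (∑' k, g k) (∑' k, f k), hScauchy]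
    linarith
  have hne : (∑' k, f k) - z ^ n ≠ 0 := sub_ne_zero.mpr hden
  -- numerator identity
  have hnum : (∑ i ∈ Finset.range n, S i) =
      ∑ k ∈ Finset.range n, x k * ∑ j ∈ Finset.Icc (k + 1) n, t (-(j : ℤ)) * z ^ (n - j + k) := by
    simp_rw [hSeq, Finset.sum_mul, Finset.mul_sum]
    rw [Finset.sum_sigma', Finset.sum_sigma']
    apply Finset.sum_nbij' (fun p => ⟨p.1 - p.2, n - p.2⟩) (fun p => ⟨p.1 + n - p.2, n - p.2⟩)
    · rintro ⟨m, j⟩ hp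
      simp only [Finset.mem_sigma, Finset.mem_range, Finset.mem_Icc] at hp ⊢
      omega
    · rintro ⟨k, j⟩ hp
      simp only [Finset.mem_sigma, Finset.mem_range, Finset.mem_Icc] at hp ⊢
      omega
    · rintro ⟨m, j⟩ hp
      simp only [Finset.mem_sigma, Finset.mem_range, Nat.lt_succ_iff] at hp
      have h1 : m - j + n - (n - j) = m := by omega
      have h2 : n - (n - j) = j := by omega
      simp only [h1, h2]
    · rintro ⟨k, j⟩ hp
      simp only [Finset.mem_sigma, Finset.mem_range, Finset.mem_Icc] at hp
      have h1 : k + n - j - (n - j) = k := by omega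
      have h2 : n - (n - j) = j := by omega
      simp only [h1, h2]
    · rintro ⟨m, j⟩ hp
      simp only [Finset.mem_sigma, Finset.mem_range, Nat.lt_succ_iff] at hp
      obtain ⟨hm, hj⟩ := hp
      have h1 : ((n - j : ℕ) : ℤ) = (n : ℤ) - j := by
        have : j ≤ n := by omega
        push_cast [this]; ring
      have h2 : n - (n - j) + (m - j) = m := by omega
      have h3 : ((j : ℤ) - n) = -(((n - j : ℕ) : ℤ)) := by rw [h1]; ring
      rw [h2, h3]
      ring
  rw [← hnum, ← hmain]
  field_simp
end

section
/- Let n ≥ 1 and (t_j)_{j≥-n} be nonnegative reals with t_{-n} > 0 and Σ_{k≥0} t_{k-n} ≤ 1. Let (x_k)_{k≥0} be any positive solution of x_k = Σ_{j=-n}^{k} t_j x_{k-j} for all k ≥ 0, and let m_0 ∈ {0,…,n−1} be an index with x_{m_0} = max{x_0,…,x_{n−1}}. Then there exists an index m with n ≤ m ≤ n + m_0 such that x_m ≥ x_{m_0}. -/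
/-- If `x_{m_0}` is a maximum of the first `n` entries of a positive solution of `x = T x`
with row sums at most 1, then some `x_m` with `n ≤ m ≤ n + m_0` is at least `x_{m_0}`. -/
theorem stmt3 (n : ℕ) (hn : 1 ≤ n) (t : ℤ → ℝ)
    (ht : ∀ j : ℤ, -(n : ℤ) ≤ j → 0 ≤ t j) (htn : 0 < t (-(n : ℤ)))
    (hsum : Summable fun k : ℕ => t ((k : ℤ) - n))
    (hsum1 : (∑' k : ℕ, t ((k : ℤ) - n)) ≤ 1)
    (x : ℕ → ℝ) (hxpos : ∀ k, 0 < x k)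
    (hrec : ∀ k : ℕ, x k = ∑ j ∈ Finset.range (k + n + 1), t ((j : ℤ) - n) * x (k + n - j))
    (m₀ : ℕ) (hm₀ : m₀ < n) (hmax : ∀ i < n, x i ≤ x m₀) :
    ∃ m : ℕ, n ≤ m ∧ m ≤ n + m₀ ∧ x m₀ ≤ x m := by
  by_contra h
  push_neg at h
  have hpart : ∀ j ∈ Finset.range (m₀ + n + 1),
      t ((j : ℤ) - n) * x (m₀ + n - j) ≤ t ((j : ℤ) - n) * x m₀ := by
    intro j hj
    have htj : 0 ≤ t ((j : ℤ) - n) := ht _ (by omega)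
    refine mul_le_mul_of_nonneg_left ?_ htj
    rcases lt_or_ge (m₀ + n - j) n with hlt | hge
    · exact hmax _ hlt
    · exact (h _ hge (by omega)).le
  have hstrict : t (((0 : ℕ) : ℤ) - n) * x (m₀ + n - 0) < t (((0 : ℕ) : ℤ) - n) * x m₀ := by
    have hx : x (m₀ + n) < x m₀ := h _ (by omega) (by omega)
    have h0 : (((0 : ℕ) : ℤ) - n) = -(n : ℤ) := by push_cast; ring
    rw [h0]
    simpa using mul_lt_mul_of_pos_left hx htn
  have hlt : x m₀ < ∑ j ∈ Finset.range (m₀ + n + 1), t ((j : ℤ) - n) * x m₀ := by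
    have := Finset.sum_lt_sum hpart ⟨0, Finset.mem_range.2 (by omega), hstrict⟩
    rw [← hrec m₀] at this
    exact this
  have hsumle : ∑ j ∈ Finset.range (m₀ + n + 1), t ((j : ℤ) - n) ≤ 1 :=
    le_trans (Summable.sum_le_tsum _ (fun i _ => ht _ (by omega)) hsum) hsum1
  rw [← Finset.sum_mul] at hlt
  have : (∑ j ∈ Finset.range (m₀ + n + 1), t ((j : ℤ) - n)) * x m₀ ≤ 1 * x m₀ :=
    mul_le_mul_of_nonneg_right hsumle (hxpos m₀).le
  linarith
end

section
/- Let n ≥ 1 and (t_j)_{j≥-n} be nonnegative reals with t_{-n} > 0 and Σ_{k≥0} t_{k-n} ≤ 1. Then every positive solution (x_k)_{k≥0} of x_k = Σ_{j=-n}^{k} t_j x_{k-j} admits a strictly increasing sequence of indices m_0 < m_1 < m_2 < … with m_{i+1} − m_i ≤ n for all i and x_{m_0} ≤ x_{m_1} ≤ x_{m_2} ≤ …, such that lim_{i→∞} x_{m_i} = limsup_{k→∞} x_k (possibly infinite). -/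
open Filter

/-- Every positive solution of `x = T x` (row sums at most 1) has a nondecreasing subsequence
with index gaps at most `n` converging (in `EReal`) to `limsup x_k`. -/
theorem stmt4 (n : ℕ) (hn : 1 ≤ n) (t : ℤ → ℝ)
    (ht : ∀ j : ℤ, -(n : ℤ) ≤ j → 0 ≤ t j) (htn : 0 < t (-(n : ℤ)))
    (hsum : Summable fun k : ℕ => t ((k : ℤ) - n))
    (hsum1 : (∑' k : ℕ, t ((k : ℤ) - n)) ≤ 1)
    (x : ℕ → ℝ) (hxpos : ∀ k, 0 < x k)
    (hrec : ∀ k : ℕ, x k = ∑ j ∈ Finset.range (k + n + 1), t ((j : ℤ) - n) * x (k + n - j)) :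
    ∃ m : ℕ → ℕ, StrictMono m ∧ (∀ i, m (i + 1) - m i ≤ n) ∧
      Monotone (fun i => x (m i)) ∧
      Tendsto (fun i => ((x (m i) : ℝ) : EReal)) atTop
        (nhds (Filter.limsup (fun k => ((x k : ℝ) : EReal)) atTop)) := by
  have htnn : ∀ j : ℕ, 0 ≤ t ((j : ℤ) - n) := by
    intro j
    apply ht
    omega
  have hpartial : ∀ s : Finset ℕ, (∑ j ∈ s, t ((j : ℤ) - n)) ≤ 1 := by
    intro s
    exact le_trans (Summable.sum_le_tsum s (fun i _ => htnn i) hsum) hsum1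
  -- Key lemma: past every index k there is, within distance n, an index m dominating
  -- all of x on [0, k+n].
  have key : ∀ k : ℕ, ∃ m, k < m ∧ m ≤ k + n ∧ ∀ j ≤ k + n, x j ≤ x m := by
    intro k
    set S : Finset ℕ :=
      (Finset.range (k + n + 1)).filter (fun m => ∀ j ≤ k + n, x j ≤ x m) with hS
    have hSne : S.Nonempty := by
      obtain ⟨b, hb, hbm⟩ := Finset.exists_max_image (Finset.range (k + n + 1)) x
        ⟨0, by simp⟩
      refine ⟨b, ?_⟩
      rw [hS, Finset.mem_filter]
      refine ⟨hb, fun j hj => hbm j ?_⟩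
      simp [Finset.mem_range]; omega
    set m := S.max' hSne with hm
    have hmS : m ∈ S := S.max'_mem hSne
    rw [hS, Finset.mem_filter, Finset.mem_range] at hmS
    obtain ⟨hmlt, hmax⟩ := hmS
    refine ⟨m, ?_, by omega, hmax⟩
    by_contra hk
    push_neg at hk
    -- m ≤ k. Then x (m+n) < x m strictly (else m+n would be a larger maximizer).
    have hmn_le : m + n ≤ k + n := by omega
    have hle : x (m + n) ≤ x m := hmax _ hmn_le
    have hstrict : x (m + n) < x m := by
      rcases lt_or_eq_of_le hle with h | h
      · exact h
      · exfalso
        have hmem : m + n ∈ S := by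
          rw [hS, Finset.mem_filter, Finset.mem_range]
          exact ⟨by omega, fun j hj => h ▸ hmax j hj⟩
        have := S.le_max' _ hmem
        omega
    -- the recurrence at m yields x m < x m
    have hlt : (∑ j ∈ Finset.range (m + n + 1), t ((j : ℤ) - n) * x (m + n - j)) <
        ∑ j ∈ Finset.range (m + n + 1), t ((j : ℤ) - n) * x m := by
      apply Finset.sum_lt_sum
      · intro j hj
        exact mul_le_mul_of_nonneg_left (hmax _ (by omega)) (htnn j)
      · refine ⟨0, by simp, ?_⟩
        have : ((0 : ℕ) : ℤ) - n = -(n : ℤ) := by push_cast; ring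
        rw [this]
        simpa using mul_lt_mul_of_pos_left hstrict htn
    have h2 : (∑ j ∈ Finset.range (m + n + 1), t ((j : ℤ) - n) * x m) ≤ x m := by
      rw [← Finset.sum_mul]
      calc (∑ j ∈ Finset.range (m + n + 1), t ((j : ℤ) - n)) * x m
          ≤ 1 * x m := mul_le_mul_of_nonneg_right (hpartial _) (hxpos m).le
        _ = x m := one_mul _
    have := (hrec m).trans_lt (hlt.trans_le h2)
    exact lt_irrefl _ this
  choose f hf1 hf2 hf3 using key
  set m : ℕ → ℕ := fun i => f^[i] (f 0) with hmdef
  have hstep : ∀ i, m (i + 1) = f (m i) := fun i => Function.iterate_succ_apply' f i (f 0)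
  have hsm : StrictMono m := by
    apply strictMono_nat_of_lt_succ
    intro i
    rw [hstep]
    exact hf1 (m i)
  have hgap : ∀ i, m (i + 1) - m i ≤ n := by
    intro i
    have h1 := hstep i
    have h2 := hf2 (m i)
    omega
  have hbound : ∀ i, ∀ j ≤ m i, x j ≤ x (m (i + 1)) := by
    intro i j hj
    rw [hstep]
    exact hf3 (m i) j (by omega)
  have hmono : Monotone fun i => x (m i) :=
    monotone_nat_of_le_succ (fun i => hbound i (m i) le_rfl)
  have hymono : Monotone fun i => ((x (m i) : ℝ) : EReal) :=
    fun a b hab => EReal.coe_le_coe_iff.2 (hmono hab)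
  have htend : Tendsto (fun i => ((x (m i) : ℝ) : EReal)) atTop
      (nhds (⨆ i, ((x (m i) : ℝ) : EReal))) := tendsto_atTop_iSup hymono
  have hEq : (⨆ i, ((x (m i) : ℝ) : EReal)) =
      Filter.limsup (fun k => ((x k : ℝ) : EReal)) atTop := by
    apply le_antisymm
    · apply iSup_le
      intro i
      apply le_limsup_of_frequently_le ?_ (by isBoundedDefault)
      rw [frequently_atTop]
      intro N
      exact ⟨m (max i N), le_trans (le_max_right i N) (hsm.le_apply),
        EReal.coe_le_coe_iff.2 (hmono (le_max_left i N))⟩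
    · apply limsup_le_of_le (by isBoundedDefault)
      apply Eventually.of_forall
      intro k
      have hk : k ≤ m k := hsm.le_apply
      exact le_trans (EReal.coe_le_coe_iff.2 (hbound k k hk))
        (le_iSup (fun i => ((x (m i) : ℝ) : EReal)) (k + 1))
  exact ⟨m, hsm, hgap, hmono, hEq ▸ htend⟩
end

section
/- Let n ≥ 1 and let τ(z) = Σ_{k≥0} t_{k-n} z^k with nonnegative coefficients, t_{-n} > 0, τ(1) = 1, and suppose the derivative of z ↦ τ(z)^{1/n} is increasing on (0,1). If Σ_{k≥1} k t_{k-n} ≤ n, then the equation z^n = τ(z) has no root in the open interval (0,1). -/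
/-!
Write `g = τ^{1/n}`. Then `g 1 = 1`, and a root `z₀ ∈ (0,1)` of `z^n = τ(z)` gives `g z₀ = z₀`,
so the chord of `g` over `[z₀, 1]` has slope `1`. By the mean value theorem `g' c = 1` for some
`c`, and since `g'` is strictly increasing, `g'` stays above some value `> 1` near `1`. On the
other hand `g' = τ' τ^{1/n - 1} / n ≤ τ^{1/n - 1} → 1`, because `τ'(z) ≤ τ'(1) ≤ n`.
-/

open Set Filter Topology

theorem slope_lt_of_strictMonoOn_deriv {g h : ℝ → ℝ} {a b L : ℝ} (hab : a < b)
    (hgc : ContinuousOn g (Icc a b)) (hgd : DifferentiableOn ℝ g (Ioo a b))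
    (hmono : StrictMonoOn (deriv g) (Ioo a b))
    (hle : ∀ᶠ x in 𝓝[<] b, deriv g x ≤ h x) (hh : Tendsto h (𝓝[<] b) (𝓝 L)) :
    slope g a b < L := by
  obtain ⟨c, hc, hslope⟩ := exists_deriv_eq_slope' g hab hgc hgd
  obtain ⟨d, hcd, hdb⟩ := exists_between hc.2
  have hd : d ∈ Ioo a b := ⟨hc.1.trans hcd, hdb⟩
  have hdL : deriv g d ≤ L := by
    refine ge_of_tendsto hh ?_
    filter_upwards [hle, Ioo_mem_nhdsLT hdb] with x hx hdx
    exact (hmono hd ⟨hd.1.trans hdx.1, hdx.2⟩ hdx.1).le.trans hx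
  rw [← hslope]
  exact (hmono hc hd hcd).trans_le hdL

section PowerSeries

variable {a : ℕ → ℝ}

theorem summable_mul_pow_of_abs_le_one (hsa : Summable a) {z : ℝ} (hz : |z| ≤ 1) :
    Summable fun k => a k * z ^ k := by
  refine Summable.of_norm_bounded hsa.abs fun k => ?_
  rw [norm_mul, norm_pow, Real.norm_eq_abs, Real.norm_eq_abs]
  exact mul_le_of_le_one_right (abs_nonneg _) (pow_le_one₀ (abs_nonneg z) hz)

theorem continuousOn_tsum_mul_pow (hsa : Summable a) :
    ContinuousOn (fun z => ∑' k, a k * z ^ k) (Icc (-1) 1) := by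
  refine continuousOn_tsum (fun k => (continuous_pow k).continuousOn.const_smul (a k)) hsa.abs
    fun k z hz => ?_
  rw [norm_mul, norm_pow, Real.norm_eq_abs, Real.norm_eq_abs]
  exact mul_le_of_le_one_right (abs_nonneg _) (pow_le_one₀ (abs_nonneg z) (abs_le.2 hz))

theorem hasDerivAt_tsum_mul_pow (hm : Summable fun k : ℕ => (k : ℝ) * a k) {z : ℝ}
    (hz : z ∈ Ioo (-1) 1) :
    HasDerivAt (fun z => ∑' k, a k * z ^ k) (∑' k : ℕ, a k * (k * z ^ (k - 1))) z := by
  refine hasDerivAt_tsum_of_isPreconnected hm.abs isOpen_Ioo isPreconnected_Ioo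
    (fun k y _ => (hasDerivAt_pow k y).const_mul (a k)) (fun k y hy => ?_)
    (by norm_num : (0 : ℝ) ∈ Ioo (-1) 1) ?_ hz
  · have hy1 : |y| ^ (k - 1) ≤ 1 := pow_le_one₀ (abs_nonneg y) (abs_le.2 ⟨hy.1.le, hy.2.le⟩)
    rw [norm_mul, norm_mul, norm_pow, Real.norm_eq_abs, Real.norm_eq_abs, Real.norm_eq_abs, abs_mul]
    calc |a k| * (|(k : ℝ)| * |y| ^ (k - 1)) ≤ |a k| * (|(k : ℝ)| * 1) := by gcongr
      _ = |(k : ℝ)| * |a k| := by ring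
  · exact summable_of_ne_finset_zero (s := {0}) fun k hk => by simp_all

theorem le_tsum_mul_pow (ha : ∀ k, 0 ≤ a k) (hsa : Summable a) {z : ℝ} (hz : z ∈ Icc 0 1) :
    a 0 ≤ ∑' k, a k * z ^ k := by
  simpa using (summable_mul_pow_of_abs_le_one hsa (abs_le.2 ⟨by linarith [hz.1], hz.2⟩)).le_tsum 0
    fun k _ => mul_nonneg (ha k) (pow_nonneg hz.1 k)

theorem tsum_mul_nat_mul_pow_le (ha : ∀ k, 0 ≤ a k) (hm : Summable fun k : ℕ => (k : ℝ) * a k)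
    {z : ℝ} (hz : z ∈ Icc 0 1) :
    ∑' k : ℕ, a k * (k * z ^ (k - 1)) ≤ ∑' k : ℕ, (k : ℝ) * a k := by
  have hle : ∀ k : ℕ, a k * (k * z ^ (k - 1)) ≤ k * a k := fun k => by
    rw [← mul_assoc, mul_comm (a k)]
    exact mul_le_of_le_one_right (mul_nonneg k.cast_nonneg (ha k)) (pow_le_one₀ hz.1 hz.2)
  have hnonneg : ∀ k : ℕ, 0 ≤ a k * (k * z ^ (k - 1)) := fun k =>
    mul_nonneg (ha k) (mul_nonneg k.cast_nonneg (pow_nonneg hz.1 _))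
  exact (hm.of_nonneg_of_le hnonneg hle).tsum_le_tsum hle hm

theorem tendsto_tsum_mul_pow_nhdsLT_one (hsa : Summable a) :
    Tendsto (fun z => ∑' k, a k * z ^ k) (𝓝[<] 1) (𝓝 (∑' k, a k)) := by
  simpa using ((continuousOn_tsum_mul_pow hsa 1 (by norm_num)).mono_of_mem_nhdsWithin
    (Icc_mem_nhdsLT (by norm_num))).tendsto

theorem hasDerivAt_tsum_mul_pow_rpow (ha : ∀ k, 0 ≤ a k) (ha0 : 0 < a 0) (hsa : Summable a)
    (hm : Summable fun k : ℕ => (k : ℝ) * a k) (p : ℝ) {z : ℝ} (hz : z ∈ Ioo 0 1) :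
    HasDerivAt (fun z => (∑' k, a k * z ^ k) ^ p)
      ((∑' k : ℕ, a k * (k * z ^ (k - 1))) * p * (∑' k, a k * z ^ k) ^ (p - 1)) z :=
  (hasDerivAt_tsum_mul_pow hm (Ioo_subset_Ioo_left (by norm_num) hz)).rpow_const
    (Or.inl (ha0.trans_le (le_tsum_mul_pow ha hsa (Ioo_subset_Icc_self hz))).ne')

theorem deriv_tsum_mul_pow_rpow_le (ha : ∀ k, 0 ≤ a k) (ha0 : 0 < a 0) (hsa : Summable a)
    (hm : Summable fun k : ℕ => (k : ℝ) * a k) {p : ℝ} (hp : 0 < p)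
    (hmom : ∑' k : ℕ, (k : ℝ) * a k ≤ p⁻¹) {z : ℝ} (hz : z ∈ Ioo 0 1) :
    deriv (fun z => (∑' k, a k * z ^ k) ^ p) z ≤ (∑' k, a k * z ^ k) ^ (p - 1) := by
  have hτ' : (∑' k : ℕ, a k * (k * z ^ (k - 1))) * p ≤ 1 := by
    rw [← le_div_iff₀ hp, one_div]
    exact (tsum_mul_nat_mul_pow_le ha hm (Ioo_subset_Icc_self hz)).trans hmom
  rw [(hasDerivAt_tsum_mul_pow_rpow ha ha0 hsa hm p hz).deriv]
  exact mul_le_of_le_one_left (Real.rpow_nonneg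
    (ha0.le.trans (le_tsum_mul_pow ha hsa (Ioo_subset_Icc_self hz))) _) hτ'

end PowerSeries

/-- Lemma 3 (a₁): if `τ(1) = 1` and `τ'(1) ≤ n`, then `z^n = τ(z)` has no root in `(0,1)`,
assuming the derivative of `τ(z)^{1/n}` is increasing on `(0,1)`. -/
theorem stmt6 (n : ℕ) (hn : 1 ≤ n) (a : ℕ → ℝ) (ha : ∀ k, 0 ≤ a k) (ha0 : 0 < a 0)
    (hsa : Summable a) (hτ1 : (∑' k : ℕ, a k) = 1)
    (hderiv : StrictMonoOn
      (deriv fun z : ℝ => (∑' k : ℕ, a k * z ^ k) ^ ((n : ℝ)⁻¹)) (Set.Ioo 0 1))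
    (hm : Summable fun k : ℕ => (k : ℝ) * a k)
    (hmom : (∑' k : ℕ, (k : ℝ) * a k) ≤ n) :
    ¬ ∃ z ∈ Set.Ioo (0 : ℝ) 1, z ^ n = ∑' k : ℕ, a k * z ^ k := by
  rintro ⟨z₀, hz₀, hroot⟩
  have hp : (0 : ℝ) < (n : ℝ)⁻¹ := inv_pos.2 (Nat.cast_pos.2 hn)
  have hlim : Tendsto (fun z => (∑' k, a k * z ^ k) ^ ((n : ℝ)⁻¹ - 1)) (𝓝[<] 1) (𝓝 1) := by
    simpa [hτ1] using
      (tendsto_tsum_mul_pow_nhdsLT_one hsa).rpow_const (p := (n : ℝ)⁻¹ - 1) (Or.inl (by simp [hτ1]))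
  have hslope := slope_lt_of_strictMonoOn_deriv hz₀.2
    (((continuousOn_tsum_mul_pow hsa).mono (Icc_subset_Icc (by linarith [hz₀.1]) le_rfl)).rpow_const
      fun _ _ => Or.inr hp.le)
    (fun z hz => (hasDerivAt_tsum_mul_pow_rpow ha ha0 hsa hm _
      ⟨hz₀.1.trans hz.1, hz.2⟩).differentiableAt.differentiableWithinAt)
    (hderiv.mono (Ioo_subset_Ioo_left hz₀.1.le))
    (by
      filter_upwards [Ioo_mem_nhdsLT hz₀.2] with z hz
      exact deriv_tsum_mul_pow_rpow_le ha ha0 hsa hm hp (by rwa [inv_inv]) ⟨hz₀.1.trans hz.1, hz.2⟩)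
    hlim
  rw [slope_def_field, ← hroot, Real.pow_rpow_inv_natCast hz₀.1.le (by omega)] at hslope
  simp only [one_pow, mul_one, hτ1, Real.one_rpow, div_self (sub_ne_zero.2 hz₀.2.ne'),
    lt_irrefl] at hslope
end

section
/- Let n ≥ 1 and τ(z) = Σ_{k≥0} t_{k-n} z^k with nonnegative coefficients, t_{-n} > 0, τ(1) = 1, and the derivative of z ↦ τ(z)^{1/n} increasing on (0,1). If Σ_{k≥1} k t_{k-n} > n, then the equation z^n = τ(z) has a root in the open interval (0,1). -/
open Filter Topology
lemma geom_low {z : ℝ} (h0 : 0 ≤ z) (h1 : z ≤ 1) (k : ℕ) :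
    (k : ℝ) * z ^ (k - 1) * (1 - z) ≤ 1 - z ^ k := by
  have hgeo : (1 - z ^ k) = (∑ i ∈ Finset.range k, z ^ i) * (1 - z) := by
    have := geom_sum_mul z k
    nlinarith [this]
  rw [hgeo]
  apply mul_le_mul_of_nonneg_right _ (by linarith)
  calc (k : ℝ) * z ^ (k - 1) = ∑ _i ∈ Finset.range k, z ^ (k - 1) := by
        simp [Finset.sum_const, mul_comm]
    _ ≤ ∑ i ∈ Finset.range k, z ^ i := by
        apply Finset.sum_le_sum
        intro i hi
        exact pow_le_pow_of_le_one h0 h1 (by have := Finset.mem_range.mp hi; omega)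

lemma geom_high {z : ℝ} (h0 : 0 ≤ z) (h1 : z ≤ 1) (n : ℕ) :
    1 - z ^ n ≤ (n : ℝ) * (1 - z) := by
  have hgeo : (1 - z ^ n) = (∑ i ∈ Finset.range n, z ^ i) * (1 - z) := by
    have := geom_sum_mul z n
    nlinarith [this]
  rw [hgeo]
  apply mul_le_mul_of_nonneg_right _ (by linarith)
  calc (∑ i ∈ Finset.range n, z ^ i) ≤ ∑ _i ∈ Finset.range n, (1:ℝ) := by
        apply Finset.sum_le_sum
        intro i _
        exact pow_le_one₀ h0 h1
    _ = n := by simp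

/-- Lemma 3 (a₂): if `τ(1) = 1` and `τ'(1) > n` (possibly `+∞`), then `z^n = τ(z)` has a root
in `(0,1)`, assuming the derivative of `τ(z)^{1/n}` is increasing on `(0,1)`. -/
theorem stmt7 (n : ℕ) (hn : 1 ≤ n) (a : ℕ → ℝ) (ha : ∀ k, 0 ≤ a k) (ha0 : 0 < a 0)
    (hsa : Summable a) (hτ1 : (∑' k : ℕ, a k) = 1)
    (hderiv : StrictMonoOn
      (deriv fun z : ℝ => (∑' k : ℕ, a k * z ^ k) ^ ((n : ℝ)⁻¹)) (Set.Ioo 0 1))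
    (hmom : (¬ Summable fun k : ℕ => (k : ℝ) * a k) ∨
      (n : ℝ) < ∑' k : ℕ, (k : ℝ) * a k) :
    ∃ z ∈ Set.Ioo (0 : ℝ) 1, z ^ n = ∑' k : ℕ, a k * z ^ k := by
  have hnn : ∀ k : ℕ, 0 ≤ (k : ℝ) * a k := fun k => mul_nonneg (Nat.cast_nonneg k) (ha k)
  -- Step 1: a partial sum of the moments exceeds n
  obtain ⟨N, hN⟩ : ∃ N, (n : ℝ) < ∑ k ∈ Finset.range N, (k : ℝ) * a k := by
    rcases hmom with h | h
    · by_contra hcon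
      push_neg at hcon
      exact h (summable_of_sum_range_le hnn hcon)
    · have hs : Summable fun k : ℕ => (k : ℝ) * a k := by
        by_contra hns
        rw [tsum_eq_zero_of_not_summable hns] at h
        have : (0:ℝ) ≤ n := Nat.cast_nonneg n
        linarith
      have := hs.hasSum.tendsto_sum_nat
      have hev := this.eventually_const_lt h
      exact hev.exists
  -- Step 2: choose z0 ∈ (0,1) where the finite sum ∑ k a_k z^(k-1) > n
  set F : ℝ → ℝ := fun z => ∑ k ∈ Finset.range N, (k : ℝ) * a k * z ^ (k - 1) with hF
  have hF1 : F 1 = ∑ k ∈ Finset.range N, (k : ℝ) * a k := by simp [hF]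
  have hFc : ContinuousAt F 1 := by
    apply Continuous.continuousAt
    exact continuous_finset_sum _ (fun k _ => by fun_prop)
  have hne : (𝓝[Set.Ioo (0:ℝ) 1] 1).NeBot := by
    rw [← mem_closure_iff_nhdsWithin_neBot, closure_Ioo (by norm_num : (0:ℝ) ≠ 1)]
    exact Set.right_mem_Icc.mpr (by norm_num)
  have htend : Filter.Tendsto F (𝓝[Set.Ioo (0:ℝ) 1] 1) (𝓝 (F 1)) :=
    hFc.continuousWithinAt
  have hev : ∀ᶠ z in 𝓝[Set.Ioo (0:ℝ) 1] 1, (n : ℝ) < F z :=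
    htend.eventually_const_lt (by rw [hF1]; exact hN)
  obtain ⟨z0, hz0F, hz0mem⟩ := (hev.and self_mem_nhdsWithin).exists
  obtain ⟨hz0pos, hz0lt⟩ := hz0mem
  -- Step 3: τ(z0) < z0^n
  have hsz : Summable fun k => a k * z0 ^ k :=
    hsa.of_nonneg_of_le (fun k => mul_nonneg (ha k) (pow_nonneg hz0pos.le k))
      (fun k => mul_le_of_le_one_right (ha k) (pow_le_one₀ hz0pos.le hz0lt.le))
  have hτlt : (∑' k : ℕ, a k * z0 ^ k) < z0 ^ n := by
    have hdiff : Summable fun k => a k - a k * z0 ^ k := hsa.sub hsz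
    have hkey : (1 - z0) * F z0 ≤ ∑' k : ℕ, (a k - a k * z0 ^ k) := by
      have h1 : (1 - z0) * F z0 = ∑ k ∈ Finset.range N,
          (1 - z0) * ((k : ℝ) * a k * z0 ^ (k - 1)) := by rw [hF]; rw [Finset.mul_sum]
      rw [h1]
      have h2 : ∑ k ∈ Finset.range N, (1 - z0) * ((k : ℝ) * a k * z0 ^ (k - 1))
          ≤ ∑ k ∈ Finset.range N, (a k - a k * z0 ^ k) := by
        apply Finset.sum_le_sum
        intro k _
        have := geom_low hz0pos.le hz0lt.le k
        have hk := ha k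
        nlinarith [this, hk]
      refine h2.trans ?_
      apply Summable.sum_le_tsum _ _ hdiff
      intro k _
      have : a k * z0 ^ k ≤ a k :=
        mul_le_of_le_one_right (ha k) (pow_le_one₀ hz0pos.le hz0lt.le)
      linarith
    rw [Summable.tsum_sub hsa hsz, hτ1] at hkey
    have h3 : (1 - z0) * (n : ℝ) < (1 - z0) * F z0 :=
      (mul_lt_mul_iff_right₀ (by linarith)).mpr hz0F
    have h4 : 1 - z0 ^ n ≤ (n : ℝ) * (1 - z0) := geom_high hz0pos.le hz0lt.le n
    nlinarith
  -- Step 4: IVT on [0, z0]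
  set g : ℝ → ℝ := fun z => z ^ n - ∑' k : ℕ, a k * z ^ k with hg
  have hcont : ContinuousOn g (Set.Icc 0 z0) := by
    apply ContinuousOn.sub (Continuous.continuousOn (by fun_prop))
    have hτcont : ContinuousOn (fun z : ℝ => ∑' k : ℕ, a k * z ^ k) (Set.Icc 0 1) := by
      apply continuousOn_tsum (u := a)
        (fun k => Continuous.continuousOn (by fun_prop)) hsa
      intro k x hx
      rw [Real.norm_eq_abs, abs_mul, abs_of_nonneg (ha k), abs_pow,
        abs_of_nonneg hx.1]
      exact mul_le_of_le_one_right (ha k) (pow_le_one₀ hx.1 hx.2)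
    exact hτcont.mono (Set.Icc_subset_Icc_right hz0lt.le)
  have hg0 : g 0 < 0 := by
    have h00 : (∑' k : ℕ, a k * (0:ℝ) ^ k) = a 0 := by
      rw [tsum_eq_single 0]
      · simp
      · intro k hk
        simp [zero_pow hk]
    rw [hg]
    simp only
    rw [h00, zero_pow (by omega : n ≠ 0)]
    linarith
  have hgz0 : 0 < g z0 := by rw [hg]; simp only; linarith
  have := intermediate_value_Ioo hz0pos.le hcont
  have h0mem : (0:ℝ) ∈ Set.Ioo (g 0) (g z0) := ⟨hg0, hgz0⟩
  obtain ⟨c, hc, hgc⟩ := this h0mem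
  refine ⟨c, ⟨hc.1, hc.2.trans hz0lt⟩, ?_⟩
  have : c ^ n - ∑' k : ℕ, a k * c ^ k = 0 := hgc
  linarith
end

section
/- Let (t_j)_{j≥-1} be nonnegative reals with t_{-1} > 0, Σ_{k≥0} t_{k-1} = 1, and Σ_{j≥1} j t_{j-1} < 1. Let (x_k)_{k≥0} be the solution of x_k = Σ_{j=-1}^{k} t_j x_{k-j} (k ≥ 0) with given x_0 > 0. Then (x_k) is nondecreasing and lim_{k→∞} x_k = x_0 t_{-1} / (1 − Σ_{j=1}^{∞} j t_{j-1}). -/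
/-!
Write `s j = t (j - 1)`, `T m = ∑_{j ≥ m} s j` and `γ = ∑ j s j = ∑_{m ≥ 1} T m`.
Monotonicity follows by induction from
`x k = s 0 x (k+1) + ∑_{j ≥ 1} s j x (k+1-j) ≤ s 0 x (k+1) + (1 - s 0) x k`.
Summing the recurrence turns it into the renewal equation
`s 0 x (n+1) = s 0 x 0 + ∑_{m ≤ n} T (m+2) x (n-m)`, whose kernel has mass
`∑_{m ≥ 2} T m = γ - (1 - s 0) < s 0`. With monotonicity this bounds `x` by `s 0 x 0 / (1 - γ)`,
so `x` converges, and dominated convergence in the renewal equation identifies the limit.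
-/

open Filter Finset Topology

noncomputable def tailSum (s : ℕ → ℝ) (m : ℕ) : ℝ := ∑' i, s (i + m)

section tailSum

variable {s : ℕ → ℝ}

theorem tailSum_eq_add_tailSum_succ (hs : Summable s) (m : ℕ) :
    tailSum s m = s m + tailSum s (m + 1) := by
  rw [tailSum, ((summable_nat_add_iff m).2 hs).tsum_eq_zero_add, zero_add]
  exact congrArg _ (tsum_congr fun i => by rw [add_right_comm, add_assoc])

theorem tailSum_one (hs1 : HasSum s 1) : tailSum s 1 = 1 - s 0 := by
  have h := tailSum_eq_add_tailSum_succ hs1.summable 0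
  rw [show tailSum s 0 = 1 from hs1.tsum_eq] at h
  linarith

theorem tailSum_nonneg (hs : ∀ j, 0 ≤ s j) (m : ℕ) : 0 ≤ tailSum s m := tsum_nonneg fun _ => hs _

theorem sum_range_tailSum_succ (hs : Summable s) (M : ℕ) :
    ∑ m ∈ range M, tailSum s (m + 1) = ∑ j ∈ range M, (j : ℝ) * s j + M * tailSum s M := by
  induction M with
  | zero => simp
  | succ M ih =>
    rw [Finset.sum_range_succ, ih, Finset.sum_range_succ, tailSum_eq_add_tailSum_succ hs M]
    push_cast
    ring

theorem tendsto_natCast_mul_tailSum (hs : ∀ j, 0 ≤ s j) (hsum : Summable s)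
    (hmom : Summable fun j : ℕ => (j : ℝ) * s j) :
    Tendsto (fun M : ℕ => M * tailSum s M) atTop (𝓝 0) := by
  refine squeeze_zero (fun M => mul_nonneg M.cast_nonneg (tailSum_nonneg hs M)) (fun M => ?_)
    (tendsto_sum_nat_add fun j : ℕ => (j : ℝ) * s j)
  rw [tailSum, ← tsum_mul_left]
  refine ((summable_nat_add_iff M).2 hsum).mul_left _ |>.tsum_le_tsum (fun i => ?_)
    ((summable_nat_add_iff M).2 hmom)
  exact mul_le_mul_of_nonneg_right (by simp) (hs _)

theorem hasSum_tailSum_succ (hs : ∀ j, 0 ≤ s j) (hsum : Summable s)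
    (hmom : Summable fun j : ℕ => (j : ℝ) * s j) :
    HasSum (fun m => tailSum s (m + 1)) (∑' j : ℕ, (j : ℝ) * s j) := by
  rw [hasSum_iff_tendsto_nat_of_nonneg (fun _ => tailSum_nonneg hs _)]
  simpa [sum_range_tailSum_succ hsum] using
    hmom.hasSum.tendsto_sum_nat.add (tendsto_natCast_mul_tailSum hs hsum hmom)

theorem hasSum_tailSum_add_two (hs : ∀ j, 0 ≤ s j) (hs1 : HasSum s 1)
    (hmom : Summable fun j : ℕ => (j : ℝ) * s j) :
    HasSum (fun m => tailSum s (m + 2)) (∑' j : ℕ, (j : ℝ) * s j - (1 - s 0)) := by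
  simpa [tailSum_one hs1] using (hasSum_nat_add_iff' 1).2 (hasSum_tailSum_succ hs hs1.summable hmom)

theorem sum_range_tailSum_add_two_le (hs : ∀ j, 0 ≤ s j) (hs1 : HasSum s 1)
    (hmom : Summable fun j : ℕ => (j : ℝ) * s j) (n : ℕ) :
    ∑ m ∈ range n, tailSum s (m + 2) ≤ ∑' j : ℕ, (j : ℝ) * s j - (1 - s 0) :=
  sum_le_hasSum _ (fun _ _ => tailSum_nonneg hs _) (hasSum_tailSum_add_two hs hs1 hmom)

end tailSum

theorem tendsto_sum_range_mul_of_tendsto {c y : ℕ → ℝ} {ℓ : ℝ} (hc : Summable c)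
    (hy : Tendsto y atTop (𝓝 ℓ)) :
    Tendsto (fun n => ∑ m ∈ range (n + 1), c m * y (n - m)) atTop (𝓝 ((∑' m, c m) * ℓ)) := by
  obtain ⟨B, hB⟩ := (Metric.isBounded_range_of_tendsto y hy).exists_norm_le
  let f : ℕ → ℕ → ℝ := fun n m => if m ≤ n then c m * y (n - m) else 0
  have hf : ∀ n, ∑' m, f n m = ∑ m ∈ range (n + 1), c m * y (n - m) := fun n => by
    rw [tsum_eq_sum (s := range (n + 1)) fun m hm => by simp_all [f]]
    exact sum_congr rfl fun m hm => by simp_all [f]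
  rw [← tsum_mul_right]
  refine (tendsto_tsum_of_dominated_convergence (bound := fun m => ‖c m‖ * B)
    (hc.norm.mul_right B) (fun m => ?_) (Eventually.of_forall fun n m => ?_)).congr hf
  · refine (tendsto_const_nhds.mul (hy.comp (tendsto_sub_atTop_nat m))).congr' ?_
    filter_upwards [eventually_ge_atTop m] with n hn
    simp [f, hn]
  · by_cases hmn : m ≤ n
    · simp only [f, hmn, if_true, norm_mul]
      exact mul_le_mul_of_nonneg_left (hB _ ⟨_, rfl⟩) (norm_nonneg _)
    · simpa [f, hmn] using
        mul_nonneg (norm_nonneg (c m)) ((norm_nonneg (y 0)).trans (hB _ ⟨0, rfl⟩))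

section Recurrence

variable {s x : ℕ → ℝ} (hrec : ∀ k, x k = ∑ j ∈ range (k + 2), s j * x (k + 1 - j))
include hrec

theorem le_succ_of_recurrence (hs : ∀ j, 0 ≤ s j) (hs0 : 0 < s 0) (hs1 : HasSum s 1) {k : ℕ}
    (hxk : 0 ≤ x k) (hle : ∀ i ≤ k, x i ≤ x k) : x k ≤ x (k + 1) := by
  have hsplit := hrec k
  rw [Finset.sum_range_succ', Nat.sub_zero] at hsplit
  have hpartial : ∑ j ∈ range (k + 1), s (j + 1) ≤ 1 - s 0 := by
    have := sum_le_hasSum (range (k + 2)) (fun j _ => hs j) hs1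
    rw [Finset.sum_range_succ'] at this
    linarith
  have hrest : ∑ j ∈ range (k + 1), s (j + 1) * x (k + 1 - (j + 1)) ≤ (1 - s 0) * x k :=
    calc _ ≤ ∑ j ∈ range (k + 1), s (j + 1) * x k :=
          sum_le_sum fun j _ => mul_le_mul_of_nonneg_left (hle _ (by omega)) (hs _)
      _ = (∑ j ∈ range (k + 1), s (j + 1)) * x k := (Finset.sum_mul ..).symm
      _ ≤ (1 - s 0) * x k := mul_le_mul_of_nonneg_right hpartial hxk
  exact le_of_mul_le_mul_left (by linarith) hs0

theorem monotone_of_recurrence (hs : ∀ j, 0 ≤ s j) (hs0 : 0 < s 0) (hs1 : HasSum s 1)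
    (hx0 : 0 ≤ x 0) : Monotone x := by
  have h : ∀ n, ∀ i ≤ n, x i ≤ x n := by
    intro n
    induction n with
    | zero => intro i hi; rw [Nat.le_zero.mp hi]
    | succ n ih =>
      have hstep := le_succ_of_recurrence hrec hs hs0 hs1 (hx0.trans (ih 0 n.zero_le)) ih
      intro i hi
      rcases Nat.le_succ_iff.mp hi with hi | rfl
      exacts [(ih i hi).trans hstep, le_rfl]
  exact monotone_nat_of_le_succ fun n => h (n + 1) n n.le_succ

theorem mul_succ_eq_add_sum_tailSum (hs1 : HasSum s 1) (n : ℕ) :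
    s 0 * x (n + 1) = s 0 * x 0 + ∑ m ∈ range (n + 1), tailSum s (m + 2) * x (n - m) := by
  have hT : ∀ m, tailSum s m = s m + tailSum s (m + 1) := tailSum_eq_add_tailSum_succ hs1.summable
  have hT2 : tailSum s 2 = 1 - s 0 - s 1 := by linarith [hT 1, tailSum_one hs1]
  induction n with
  | zero =>
    have := hrec 0
    simp only [zero_add, Finset.sum_range_succ, range_one, sum_singleton, tsub_zero,
      tsub_self] at this
    simp only [zero_add, range_one, zero_tsub, sum_singleton, hT2]
    linarith
  | succ n ih =>
    have hxn := hrec (n + 1)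
    rw [Finset.sum_range_succ', Finset.sum_range_succ'] at hxn
    rw [Finset.sum_range_succ']
    simp only [Nat.add_sub_add_right, Nat.add_sub_cancel, zero_add, Nat.sub_zero] at hxn ⊢
    have hshift : ∑ k ∈ range (n + 1), tailSum s (k + 1 + 2) * x (n - k) =
        ∑ k ∈ range (n + 1), tailSum s (k + 2) * x (n - k) -
          ∑ k ∈ range (n + 1), s (k + 2) * x (n - k) := by
      rw [← sum_sub_distrib]
      exact sum_congr rfl fun k _ => by rw [hT (k + 2)]; ring
    rw [hshift, hT2]
    linear_combination ih - hxn

theorem sub_mul_le_of_recurrence (hs : ∀ j, 0 ≤ s j) (hs1 : HasSum s 1)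
    (hmom : Summable fun j : ℕ => (j : ℝ) * s j) (hx0 : 0 ≤ x 0) (hmono : Monotone x) (n : ℕ) :
    (1 - ∑' j : ℕ, (j : ℝ) * s j) * x (n + 1) ≤ s 0 * x 0 := by
  have hsum := sum_range_tailSum_add_two_le hs hs1 hmom (n + 1)
  have hxn : 0 ≤ x (n + 1) := hx0.trans (hmono (Nat.zero_le _))
  have := calc ∑ m ∈ range (n + 1), tailSum s (m + 2) * x (n - m)
      ≤ ∑ m ∈ range (n + 1), tailSum s (m + 2) * x (n + 1) :=
        sum_le_sum fun m _ => mul_le_mul_of_nonneg_left (hmono (by omega)) (tailSum_nonneg hs _)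
    _ = (∑ m ∈ range (n + 1), tailSum s (m + 2)) * x (n + 1) := (Finset.sum_mul ..).symm
    _ ≤ _ := mul_le_mul_of_nonneg_right hsum hxn
  linarith [mul_succ_eq_add_sum_tailSum hrec hs1 n]

theorem tendsto_of_recurrence (hs : ∀ j, 0 ≤ s j) (hs0 : 0 < s 0) (hs1 : HasSum s 1)
    (hmom : Summable fun j : ℕ => (j : ℝ) * s j) (hγ : ∑' j : ℕ, (j : ℝ) * s j < 1)
    (hx0 : 0 ≤ x 0) :
    Tendsto x atTop (𝓝 (x 0 * s 0 / (1 - ∑' j : ℕ, (j : ℝ) * s j))) := by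
  set γ := ∑' j : ℕ, (j : ℝ) * s j
  have hmono := monotone_of_recurrence hrec hs hs0 hs1 hx0
  have hbdd : BddAbove (Set.range x) := by
    refine ⟨s 0 * x 0 / (1 - γ), Set.forall_mem_range.2 fun n => (hmono n.le_succ).trans ?_⟩
    rw [le_div_iff₀ (by linarith), mul_comm]
    exact sub_mul_le_of_recurrence hrec hs hs1 hmom hx0 hmono n
  have hlim := tendsto_atTop_ciSup hmono hbdd
  set ℓ := ⨆ n, x n
  have hconv := tendsto_sum_range_mul_of_tendsto (hasSum_tailSum_add_two hs hs1 hmom).summable hlim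
  rw [(hasSum_tailSum_add_two hs hs1 hmom).tsum_eq] at hconv
  have hconv' : Tendsto (fun n => s 0 * x (n + 1) - s 0 * x 0) atTop (𝓝 (s 0 * ℓ - s 0 * x 0)) :=
    ((hlim.comp (tendsto_add_atTop_nat 1)).const_mul _).sub_const _
  have heq := tendsto_nhds_unique hconv (hconv'.congr fun n => by
    rw [mul_succ_eq_add_sum_tailSum hrec hs1 n]; ring)
  convert hlim using 2
  field_simp [show 1 - γ ≠ 0 by linarith]
  linear_combination heq

end Recurrence

/-- Theorem 2 (ii), case `n = 1`: the solution is nondecreasing and converges to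
`x_0 t_{-1} / (1 - Σ_j j t_{j-1})`. -/
theorem stmt12 (t : ℤ → ℝ)
    (ht : ∀ j : ℤ, -1 ≤ j → 0 ≤ t j) (ht1 : 0 < t (-1))
    (hsum : Summable fun k : ℕ => t ((k : ℤ) - 1))
    (hsum1 : (∑' k : ℕ, t ((k : ℤ) - 1)) = 1)
    (hmom : Summable fun j : ℕ => (j : ℝ) * t ((j : ℤ) - 1))
    (hγ : (∑' j : ℕ, (j : ℝ) * t ((j : ℤ) - 1)) < 1)
    (x : ℕ → ℝ) (hx0 : 0 < x 0)
    (hrec : ∀ k : ℕ, x k = ∑ j ∈ Finset.range (k + 2), t ((j : ℤ) - 1) * x (k + 1 - j)) :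
    Monotone x ∧
      Tendsto x atTop
        (nhds (x 0 * t (-1) / (1 - ∑' j : ℕ, (j : ℝ) * t ((j : ℤ) - 1)))) := by
  set s : ℕ → ℝ := fun j => t ((j : ℤ) - 1)
  have hs : ∀ j, 0 ≤ s j := fun j => ht _ (by omega)
  have hs0 : t (-1) = s 0 := by simp [s]
  have hs1 : HasSum s 1 := hsum1 ▸ hsum.hasSum
  rw [hs0] at ht1 ⊢
  exact ⟨monotone_of_recurrence hrec hs ht1 hs1 hx0.le,
    tendsto_of_recurrence hrec hs ht1 hs1 hmom hγ hx0.le⟩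
end

section
/- Let n ≥ 1 and (t_j)_{j≥-n} be nonnegative with t_{-n} > 0 and Σ_{k≥0} t_{k-n} < 1. Then every positive solution (x_k) of x_k = Σ_{j=-n}^{k} t_j x_{k-j} is unbounded: limsup_{k→∞} x_k = ∞. -/
open Filter

/-- Theorem 2 (iii): if the row sums are less than 1, every positive solution of `x = T x`
is unbounded. -/
theorem stmt15 (n : ℕ) (hn : 1 ≤ n) (t : ℤ → ℝ)
    (ht : ∀ j : ℤ, -(n : ℤ) ≤ j → 0 ≤ t j) (htn : 0 < t (-(n : ℤ)))
    (hsum : Summable fun k : ℕ => t ((k : ℤ) - n))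
    (hsum1 : (∑' k : ℕ, t ((k : ℤ) - n)) < 1)
    (x : ℕ → ℝ) (hxpos : ∀ k, 0 < x k)
    (hrec : ∀ k : ℕ, x k = ∑ j ∈ Finset.range (k + n + 1), t ((j : ℤ) - n) * x (k + n - j)) :
    Filter.limsup (fun k => ((x k : ℝ) : EReal)) atTop = ⊤ := by
  by_contra hcon
  have hlt : limsup (fun k => ((x k : ℝ) : EReal)) atTop < ⊤ := lt_top_iff_ne_top.2 hcon
  obtain ⟨c, hc1, -⟩ := EReal.exists_between_coe_real hlt
  have hev : ∀ᶠ k in atTop, ((x k : ℝ) : EReal) < (c : EReal) :=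
    eventually_lt_of_limsup_lt hc1
  obtain ⟨N, hN⟩ := eventually_atTop.1 hev
  have hNreal : ∀ k, N ≤ k → x k < c := by
    intro k hk
    exact_mod_cast hN k hk
  have htnonneg : ∀ j : ℕ, 0 ≤ t ((j : ℤ) - n) := by
    intro j
    exact ht _ (by omega)
  set w := ∑' k : ℕ, t ((k : ℤ) - n) with hw
  have hw0 : 0 ≤ w := tsum_nonneg htnonneg
  have hc0 : 0 < c := lt_trans (hxpos N) (hNreal N le_rfl)
  set B := c + ∑ i ∈ Finset.range N, x i with hBdef
  have hB : ∀ k, x k ≤ B := by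
    intro k
    have hsumpos : 0 ≤ ∑ i ∈ Finset.range N, x i :=
      Finset.sum_nonneg fun i _ => (hxpos i).le
    by_cases hk : N ≤ k
    · have := hNreal k hk
      simp only [hBdef]; linarith
    · have : x k ≤ ∑ i ∈ Finset.range N, x i :=
        Finset.single_le_sum (fun i _ => (hxpos i).le) (Finset.mem_range.2 (by omega))
      simp only [hBdef]; linarith
  have hbdd : BddAbove (Set.range x) := ⟨B, by rintro _ ⟨k, rfl⟩; exact hB k⟩
  set S := sSup (Set.range x) with hSdef
  have hkS : ∀ k, x k ≤ S := fun k => le_csSup hbdd ⟨k, rfl⟩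
  have hS0 : 0 < S := lt_of_lt_of_le (hxpos 0) (hkS 0)
  have key : ∀ k, x k ≤ w * S := by
    intro k
    rw [hrec k]
    calc ∑ j ∈ Finset.range (k + n + 1), t ((j : ℤ) - n) * x (k + n - j)
        ≤ ∑ j ∈ Finset.range (k + n + 1), t ((j : ℤ) - n) * S := by
          refine Finset.sum_le_sum fun j _ => ?_
          exact mul_le_mul_of_nonneg_left (hkS _) (htnonneg j)
      _ = (∑ j ∈ Finset.range (k + n + 1), t ((j : ℤ) - n)) * S := by
          rw [Finset.sum_mul]
      _ ≤ w * S := by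
          refine mul_le_mul_of_nonneg_right ?_ hS0.le
          exact Summable.sum_le_tsum _ (fun j _ => htnonneg j) hsum
  have hSle : S ≤ w * S :=
    csSup_le (Set.range_nonempty x) (by rintro _ ⟨k, rfl⟩; exact key k)
  nlinarith
end

section
/- Let n ≥ 1 and (t_j)_{j≥-n} be nonnegative with t_{-n} > 0, Σ_{k≥0} t_{k-n} = 1, and Σ_{k≥1} k t_{k-n} = n. Then every positive solution (x_k) of x_k = Σ_{j=-n}^{k} t_j x_{k-j} satisfies Σ_{k≥0} x_k = ∞ and limsup_{k→∞} x_k = ∞, i.e., the solution is unbounded. -/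
/-!
Let `a(z) = ∑ aₖ zᵏ` and `x(z) = ∑ xₖ zᵏ`, where `aₖ = t_{k-n}`. By the recurrence,
`x(z) (a(z) - zⁿ)` is a polynomial of degree `< n` with constant term `a₀ x₀ > 0`, so it is bounded
below by `a₀ x₀` on `(0, 1)`. Since `a(1) = 1` and `a'(1) = n`, the quotient
`(a(z) - zⁿ) / (1 - z)` tends to `0` as `z → 1⁻`; hence `(1 - z) x(z)` is unbounded, which is
impossible when `x` is bounded, in particular when `x` is summable or has finite `limsup`.
-/

open Filter Finset Topology

noncomputable def genFun (a : ℕ → ℝ) (z : ℝ) : ℝ := ∑' k, a k * z ^ k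

section GeneratingFunctions

variable {a x : ℕ → ℝ} {n : ℕ} {z : ℝ}

lemma geom_sum_le_of_nonneg_of_le_one (hz0 : 0 ≤ z) (hz1 : z ≤ 1) (k : ℕ) :
    ∑ i ∈ range k, z ^ i ≤ k := by
  simpa using sum_le_sum fun i (_ : i ∈ range k) => pow_le_one₀ hz0 hz1

lemma summable_norm_mul_pow_of_bounded {M : ℝ} (hx : ∀ k, |x k| ≤ M) (hz0 : 0 ≤ z)
    (hz1 : z < 1) : Summable fun k => ‖x k * z ^ k‖ :=
  .of_nonneg_of_le (fun _ => norm_nonneg _)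
    (fun k => by
      rw [norm_mul, norm_pow, Real.norm_of_nonneg hz0]
      exact mul_le_mul_of_nonneg_right (hx k) (by positivity))
    ((summable_geometric_of_lt_one hz0 hz1).mul_left M)

lemma summable_norm_mul_pow_of_nonneg (ha : ∀ k, 0 ≤ a k) (hsum : Summable a) (hz0 : 0 ≤ z)
    (hz1 : z ≤ 1) : Summable fun k => ‖a k * z ^ k‖ :=
  .of_nonneg_of_le (fun _ => norm_nonneg _)
    (fun k => by
      rw [Real.norm_of_nonneg (mul_nonneg (ha k) (pow_nonneg hz0 k))]
      exact mul_le_of_le_one_right (ha k) (pow_le_one₀ hz0 hz1))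
    hsum

lemma one_sub_mul_genFun_le {M : ℝ} (hx0 : ∀ k, 0 ≤ x k) (hxM : ∀ k, x k ≤ M) (hz0 : 0 ≤ z)
    (hz1 : z < 1) : (1 - z) * genFun x z ≤ M := by
  have hle : genFun x z ≤ ∑' k, M * z ^ k :=
    Summable.tsum_le_tsum (fun k => mul_le_mul_of_nonneg_right (hxM k) (by positivity))
      (summable_norm_mul_pow_of_bounded
        (fun k => (abs_of_nonneg (hx0 k)).trans_le (hxM k)) hz0 hz1).of_norm
      ((summable_geometric_of_lt_one hz0 hz1).mul_left M)
  rw [tsum_mul_left, tsum_geometric_of_lt_one hz0 hz1] at hle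
  calc (1 - z) * genFun x z ≤ (1 - z) * (M * (1 - z)⁻¹) :=
        mul_le_mul_of_nonneg_left hle (by linarith)
    _ = M := by rw [mul_comm M, mul_inv_cancel_left₀ (sub_pos.mpr hz1).ne']

lemma genFun_mul_genFun_of_recurrence (ha : Summable fun k => ‖a k * z ^ k‖)
    (hx : Summable fun k => ‖x k * z ^ k‖)
    (hrec : ∀ k, x k = ∑ j ∈ range (k + n + 1), a j * x (k + n - j)) :
    genFun a z * genFun x z =
      ∑ m ∈ range n, (∑ j ∈ range (m + 1), a j * x (m - j)) * z ^ m + z ^ n * genFun x z := by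
  have hcoeff : ∀ m, ∑ j ∈ range (m + 1), a j * z ^ j * (x (m - j) * z ^ (m - j)) =
      (∑ j ∈ range (m + 1), a j * x (m - j)) * z ^ m := by
    intro m
    rw [sum_mul]
    refine sum_congr rfl fun j hj => ?_
    rw [← pow_sub_mul_pow z (mem_range_succ_iff.mp hj)]
    ring
  rw [genFun, genFun, tsum_mul_tsum_eq_tsum_sum_range_of_summable_norm ha hx,
    ← (summable_norm_sum_mul_range_of_summable_norm ha hx).of_norm.sum_add_tsum_nat_add n]
  simp only [hcoeff, ← hrec, ← tsum_mul_left, pow_add]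
  congr 1
  exact tsum_congr fun k => by ring

lemma tsum_sub_genFun_eq (ha : ∀ k, 0 ≤ a k) (hsum : Summable a) (hz0 : 0 ≤ z) (hz1 : z ≤ 1) :
    ∑' k, a k - genFun a z = (1 - z) * ∑' k, a k * ∑ i ∈ range k, z ^ i := by
  rw [genFun, ← hsum.tsum_sub (summable_norm_mul_pow_of_nonneg ha hsum hz0 hz1).of_norm,
    ← tsum_mul_left]
  exact tsum_congr fun k => by linear_combination (a k) * (mul_neg_geom_sum z k).symm

lemma tendsto_tsum_mul_geom_sum (ha : ∀ k, 0 ≤ a k)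
    (hmom : Summable fun k : ℕ => (k : ℝ) * a k) :
    Tendsto (fun z => ∑' k, a k * ∑ i ∈ range k, z ^ i) (𝓝[<] 1)
      (𝓝 (∑' k : ℕ, (k : ℝ) * a k)) := by
  refine tendsto_tsum_of_dominated_convergence hmom (fun k => ?_) ?_
  · exact ((by fun_prop : Continuous fun z : ℝ => a k * ∑ i ∈ range k, z ^ i).tendsto' 1 _
      (by simp [mul_comm])).mono_left nhdsWithin_le_nhds
  · filter_upwards [Ioo_mem_nhdsLT zero_lt_one] with z hz k
    rw [Real.norm_of_nonneg (mul_nonneg (ha k) (by have := hz.1.le; positivity)),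
      mul_comm (k : ℝ)]
    exact mul_le_mul_of_nonneg_left (geom_sum_le_of_nonneg_of_le_one hz.1.le hz.2.le k) (ha k)

theorem not_bddAbove_range_of_recurrence (hn : 1 ≤ n) (ha : ∀ k, 0 ≤ a k) (ha0 : 0 < a 0)
    (hsum : HasSum a 1) (hmom : HasSum (fun k : ℕ => (k : ℝ) * a k) n) (hxpos : ∀ k, 0 < x k)
    (hrec : ∀ k, x k = ∑ j ∈ range (k + n + 1), a j * x (k + n - j)) :
    ¬ BddAbove (Set.range x) := by
  rintro ⟨M, hM⟩
  have hxM : ∀ k, x k ≤ M := fun k => hM (Set.mem_range_self k)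
  -- `D z = (a(z) - zⁿ) / (1 - z)`, see `tsum_sub_genFun_eq`
  set D : ℝ → ℝ := fun z => ∑ i ∈ range n, z ^ i - ∑' k, a k * ∑ i ∈ range k, z ^ i
  have hD : Tendsto D (𝓝[<] 1) (𝓝 0) := by
    have hgeom : Tendsto (fun z : ℝ => ∑ i ∈ range n, z ^ i) (𝓝[<] 1) (𝓝 n) :=
      ((by fun_prop : Continuous fun z : ℝ => ∑ i ∈ range n, z ^ i).tendsto' 1 _
        (by simp)).mono_left nhdsWithin_le_nhds
    simpa [hmom.tsum_eq] using hgeom.sub (tendsto_tsum_mul_geom_sum ha hmom.summable)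
  have hlower : ∀ z ∈ Set.Ioo (0 : ℝ) 1, a 0 * x 0 ≤ (1 - z) * genFun x z * D z := by
    rintro z ⟨hz0, hz1⟩
    have hid := genFun_mul_genFun_of_recurrence (z := z)
      (summable_norm_mul_pow_of_nonneg ha hsum.summable hz0.le hz1.le)
      (summable_norm_mul_pow_of_bounded
        (fun k => (abs_of_pos (hxpos k)).trans_le (hxM k)) hz0.le hz1) hrec
    have hA := tsum_sub_genFun_eq ha hsum.summable hz0.le hz1.le
    rw [hsum.tsum_eq] at hA
    have hhead : a 0 * x 0 ≤
        ∑ m ∈ range n, (∑ j ∈ range (m + 1), a j * x (m - j)) * z ^ m := by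
      simpa using single_le_sum (f := fun m => (∑ j ∈ range (m + 1), a j * x (m - j)) * z ^ m)
        (fun m _ => mul_nonneg (sum_nonneg fun j _ => mul_nonneg (ha j) (hxpos _).le)
          (by positivity)) (mem_range.mpr hn)
    have hgeom := mul_neg_geom_sum z n
    simp only [D]
    linear_combination hhead - genFun x z * hgeom - genFun x z * hA - hid
  have hprod : Tendsto (fun z => (1 - z) * genFun x z * D z) (𝓝[<] 1) (𝓝 0) := by
    refine isBoundedUnder_le_mul_tendsto_zero ?_ hD
    refine isBoundedUnder_of_eventually_le (a := M) ?_
    filter_upwards [Ioo_mem_nhdsLT zero_lt_one] with z hz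
    have hnonneg : 0 ≤ (1 - z) * genFun x z :=
      mul_nonneg (by linarith [hz.2])
        (tsum_nonneg fun k => mul_nonneg (hxpos k).le (pow_nonneg hz.1.le k))
    rw [Function.comp_apply, Real.norm_of_nonneg hnonneg]
    exact one_sub_mul_genFun_le (fun k => (hxpos k).le) hxM hz.1.le hz.2
  have hnonpos := ge_of_tendsto hprod (eventually_of_mem (Ioo_mem_nhdsLT zero_lt_one) hlower)
  linarith [mul_pos ha0 (hxpos 0)]

end GeneratingFunctions

lemma bddAbove_range_of_limsup_ne_top {u : ℕ → ℝ}
    (h : limsup (fun k => (u k : EReal)) atTop ≠ ⊤) : BddAbove (Set.range u) := by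
  obtain ⟨r, hr, -⟩ := EReal.lt_iff_exists_real_btwn.mp (lt_top_iff_ne_top.mpr h)
  refine IsBoundedUnder.bddAbove_range (isBoundedUnder_of_eventually_le (a := r) ?_)
  filter_upwards [eventually_lt_of_limsup_lt hr] with k hk
  exact_mod_cast hk.le

/-- Critical case of Theorem 2 (ii): if `τ(1) = 1` and `τ'(1) = n`, every positive solution
of `x = T x` has divergent sum and infinite `limsup`. -/
theorem stmt16 (n : ℕ) (hn : 1 ≤ n) (t : ℤ → ℝ)
    (ht : ∀ j : ℤ, -(n : ℤ) ≤ j → 0 ≤ t j) (htn : 0 < t (-(n : ℤ)))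
    (hsum : Summable fun k : ℕ => t ((k : ℤ) - n))
    (hsum1 : (∑' k : ℕ, t ((k : ℤ) - n)) = 1)
    (hmom : Summable fun k : ℕ => (k : ℝ) * t ((k : ℤ) - n))
    (hγ : (∑' k : ℕ, (k : ℝ) * t ((k : ℤ) - n)) = n)
    (x : ℕ → ℝ) (hxpos : ∀ k, 0 < x k)
    (hrec : ∀ k : ℕ, x k = ∑ j ∈ Finset.range (k + n + 1), t ((j : ℤ) - n) * x (k + n - j)) :
    (¬ Summable x) ∧ Filter.limsup (fun k => ((x k : ℝ) : EReal)) atTop = ⊤ := by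
  have hunbdd : ¬ BddAbove (Set.range x) :=
    not_bddAbove_range_of_recurrence (a := fun k : ℕ => t ((k : ℤ) - n)) hn
      (fun k => ht _ (by omega)) (by simpa using htn) (hsum.hasSum_iff.mpr hsum1)
      (hmom.hasSum_iff.mpr hγ) hxpos hrec
  exact ⟨fun hx => hunbdd hx.tendsto_atTop_zero.bddAbove_range,
    by_contra fun h => hunbdd (bddAbove_range_of_limsup_ne_top h)⟩
end
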